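/- For every κ ≠ 0, set β = κ / 16^{1/3}. Then the polynomial function g(x,y,z) = (1/3)(x³ + y³ + z³) + β(x + y)² is affinely equivalent, up to an additive constant, to the polynomial function f(x,y,z) = (1/3)x³ − (1/3)z³ − y²z + κz²: there exist an invertible affine transformation T of ℝ³ and a constant c ∈ ℝ such that g(T(p)) = f(p) + c for all p ∈ ℝ³. -/
import Mathlib


/-- For κ ≠ 0 and β = κ/16^{1/3}, the polynomial function
g(x,y,z) = (1/3)(x³+y³+z³) + β(x+y)² is affinely equivalent, up to an additive
constant, to f(x,y,z) = (1/3)x³ − (1/3)z³ − y²z + κz²: there are an invertible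
affine transformation T of ℝ³ and a constant c with g(T p) = f p + c for all p. -/
theorem affine_equivalence_E6A2_normal_form (κ : ℝ) (hκ : κ ≠ 0) :
    ∃ (T : (Fin 3 → ℝ) ≃ᵃ[ℝ] (Fin 3 → ℝ)) (c : ℝ),
      ∀ p : Fin 3 → ℝ,
        (1 / 3) * ((T p 0) ^ 3 + (T p 1) ^ 3 + (T p 2) ^ 3)
            + (κ / (16 : ℝ) ^ ((1 : ℝ) / 3)) * (T p 0 + T p 1) ^ 2
          = (1 / 3) * (p 0) ^ 3 - (1 / 3) * (p 2) ^ 3 - (p 1) ^ 2 * p 2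
            + κ * (p 2) ^ 2 + c := by
  set a : ℝ := (2 : ℝ) ^ (-(1 : ℝ)/3) with ha
  have hapos : 0 < a := Real.rpow_pos_of_pos (by norm_num) _
  have ha3 : a ^ 3 = 1 / 2 := by
    rw [ha, ← Real.rpow_natCast ((2:ℝ) ^ (-(1:ℝ)/3)) 3,
      ← Real.rpow_mul (by norm_num : (0:ℝ) ≤ 2)]
    norm_num
  have h16pos : 0 < (16 : ℝ) ^ ((1 : ℝ)/3) := Real.rpow_pos_of_pos (by norm_num) _
  have h163 : ((16 : ℝ) ^ ((1 : ℝ)/3)) ^ (3 : ℕ) = 16 := by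
    rw [← Real.rpow_natCast ((16:ℝ) ^ ((1:ℝ)/3)) 3,
      ← Real.rpow_mul (by norm_num : (0:ℝ) ≤ 16)]
    norm_num
  have h16 : (16 : ℝ) ^ ((1 : ℝ)/3) = 2 / a := by
    have h2 : (2 / a) ^ (3:ℕ) = 16 := by
      rw [div_pow, ha3]; norm_num
    have hsp : 0 < 2 / a := by positivity
    nlinarith [sq_nonneg ((16:ℝ) ^ ((1:ℝ)/3) - 2/a), sq_nonneg ((16:ℝ) ^ ((1:ℝ)/3) + 2/a),
      mul_pos h16pos hsp]
  have hβ : κ / (16 : ℝ) ^ ((1 : ℝ)/3) = κ * a / 2 := by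
    rw [h16]; field_simp
  let L : (Fin 3 → ℝ) ≃ₗ[ℝ] (Fin 3 → ℝ) :=
    { toFun := fun p => ![a * (p 1 - p 2), -a * (p 1 + p 2), p 0]
      map_add' := by
        intro p q; funext i; fin_cases i <;> simp <;> ring
      map_smul' := by
        intro r p; funext i; fin_cases i <;> simp <;> ring
      invFun := fun q => ![q 2, a ^ 2 * (q 0 - q 1), -(a ^ 2) * (q 0 + q 1)]
      left_inv := by
        have k1 : ∀ x y : ℝ, a ^ 2 * (a * (x - y) + a * (x + y)) = x :=
          fun x y => by linear_combination 2 * x * ha3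
        have k2 : ∀ x y : ℝ, -(a ^ 2 * (a * (x - y) + -(a * (x + y)))) = y :=
          fun x y => by linear_combination 2 * y * ha3
        intro p; funext i; fin_cases i <;> simp <;>
          first
          | exact k1 _ _
          | exact k2 _ _
      right_inv := by
        have k3 : ∀ x y : ℝ, a * (a ^ 2 * (x - y) + a ^ 2 * (x + y)) = x :=
          fun x y => by linear_combination 2 * x * ha3
        have k4 : ∀ x y : ℝ, -(a * (a ^ 2 * (x - y) + -(a ^ 2 * (x + y)))) = y :=
          fun x y => by linear_combination 2 * y * ha3
        intro q; funext i; fin_cases i <;> simp <;>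
          first
          | exact k3 _ _
          | exact k4 _ _ }
  refine ⟨L.toAffineEquiv, 0, fun p => ?_⟩
  have hT : ∀ i, L.toAffineEquiv p i = (![a * (p 1 - p 2), -a * (p 1 + p 2), p 0] : Fin 3 → ℝ) i :=
    fun i => rfl
  rw [hβ, hT 0, hT 1, hT 2]
  simp only [Matrix.cons_val_zero, Matrix.cons_val_one, Matrix.head_cons,
    Matrix.cons_val_two, Matrix.tail_cons]
  linear_combination (-2 * (p 1)^2 * p 2 - (2/3) * (p 2)^3 + 2 * κ * (p 2)^2) * ha3
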